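/- arXiv:2102.04146 — 4 statements merged into one kernel-verified Lean document; each statement's English description precedes it below -/
import Mathlib

section
/- Let ρ and σ be positive definite states on M_d(ℂ) such that ρ ≤ c·σ in the Loewner order for some c > 0. Then for every matrix X ∈ M_d(ℂ) and all μ₁, μ₂ > 0, ∫₀^∞ tr(X†(μ₁σ + r)⁻¹ X (μ₂σ + r)⁻¹) dr ≤ c · ∫₀^∞ tr(X†(μ₁ρ + r)⁻¹ X (μ₂ρ + r)⁻¹) dr. -/
open scoped ComplexOrder
open MeasureTheory Matrix Set

namespace WIC

variable {d : ℕ}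

local notation "M" => Matrix (Fin d) (Fin d) ℂ

lemma real_smul_eq (a : ℝ) (A : M) : a • A = (a : ℂ) • A := by
  ext i j; simp [Complex.real_smul]

lemma psd_smul {A : M} (hA : A.PosSemidef) {a : ℂ} (ha : 0 ≤ a) : (a • A).PosSemidef := by
  refine ⟨?_, fun x => ?_⟩
  · show (a • A)ᴴ = a • A
    rw [conjTranspose_smul, hA.isHermitian.eq]
    congr 1
    exact Complex.conj_eq_iff_im.mpr (Complex.le_def.mp ha).2.symm
  · exact (hA.smul ha).2 x

lemma psd_smul_real {A : M} (hA : A.PosSemidef) {a : ℝ} (ha : 0 ≤ a) : (a • A).PosSemidef := by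
  rw [real_smul_eq]; exact psd_smul hA (by exact_mod_cast ha)

lemma pd_smul_real {A : M} (hA : A.PosDef) {a : ℝ} (ha : 0 < a) : (a • A).PosDef := by
  rw [real_smul_eq]
  refine ⟨?_, fun x hx => ?_⟩
  · show ((a:ℂ) • A)ᴴ = (a:ℂ) • A
    rw [conjTranspose_smul, hA.isHermitian.eq, Complex.star_def, Complex.conj_ofReal]
  · exact (hA.smul (by exact_mod_cast ha : (0:ℂ) < a)).2 hx

lemma trace_nonneg' {A : M} (hA : A.PosSemidef) : 0 ≤ A.trace := by
  rw [Matrix.trace]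
  refine Finset.sum_nonneg fun i _ => ?_
  exact hA.diag_nonneg

lemma trace_re_nonneg {A : M} (hA : A.PosSemidef) : 0 ≤ A.trace.re := by
  have := trace_nonneg' hA
  simpa using (Complex.le_def.mp this).1

open scoped MatrixOrder in
lemma trace_form_nonneg (X : M) {A B : M} (hA : A.PosSemidef) (hB : B.PosSemidef) :
    0 ≤ (Xᴴ * A * X * B).trace := by
  classical
  set S := CFC.sqrt B with hSdef
  have hS : S * S = B := CFC.sqrt_mul_sqrt_self B hB.nonneg
  have hSh : S.IsHermitian := (CFC.sqrt_nonneg B).posSemidef.isHermitian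
  have e : (Xᴴ * A * X * B).trace = (Sᴴ * (Xᴴ * A * X) * S).trace := by
    calc (Xᴴ * A * X * B).trace = ((Xᴴ * A * X * S) * S).trace := by
          rw [← hS, ← mul_assoc]
      _ = (S * (Xᴴ * A * X * S)).trace := (trace_mul_comm _ _).symm
      _ = (Sᴴ * (Xᴴ * A * X) * S).trace := by rw [hSh.eq, ← mul_assoc, ← mul_assoc]
  rw [e]
  exact trace_nonneg' ((hA.conjTranspose_mul_mul_same X).conjTranspose_mul_mul_same S)

lemma trace_form_re_nonneg (X : M) {A B : M} (hA : A.PosSemidef) (hB : B.PosSemidef) :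
    0 ≤ (Xᴴ * A * X * B).trace.re := by
  have := trace_form_nonneg X hA hB
  simpa using (Complex.le_def.mp this).1

lemma trace_form_mono (X : M) {A A' B B' : M} (hAA : (A' - A).PosSemidef)
    (hB : B.PosSemidef) (hA' : A'.PosSemidef) (hBB : (B' - B).PosSemidef) :
    (Xᴴ * A * X * B).trace.re ≤ (Xᴴ * A' * X * B').trace.re := by
  have h1 := trace_form_nonneg X hAA hB
  have h2 := trace_form_nonneg X hA' hBB
  have e1 : Xᴴ * (A' - A) * X * B = Xᴴ * A' * X * B - Xᴴ * A * X * B := by noncomm_ring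
  have e2 : Xᴴ * A' * X * (B' - B) = Xᴴ * A' * X * B' - Xᴴ * A' * X * B := by noncomm_ring
  rw [e1, trace_sub] at h1
  rw [e2, trace_sub] at h2
  have r1 := (Complex.le_def.mp h1).1
  have r2 := (Complex.le_def.mp h2).1
  simp only [Complex.zero_re, Complex.sub_re] at r1 r2
  linarith

lemma inv_antitone {A B : M} (hA : A.PosDef) (hB : B.PosDef)
    (h : (B - A).PosSemidef) : (A⁻¹ - B⁻¹).PosSemidef := by
  classical
  have hAd : IsUnit A.det := isUnit_iff_isUnit_det _ |>.mp hA.isUnit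
  have hBd : IsUnit B.det := isUnit_iff_isUnit_det _ |>.mp hB.isUnit
  set D := B - A with hD
  have hDh : D.IsHermitian := h.isHermitian
  have hBinvh : (B⁻¹ : M).IsHermitian := hB.inv.isHermitian
  have key : A⁻¹ - B⁻¹ = B⁻¹ * D * B⁻¹ + (D * B⁻¹)ᴴ * A⁻¹ * (D * B⁻¹) := by
    have e0 : (D * B⁻¹)ᴴ = B⁻¹ * D := by
      rw [conjTranspose_mul, hDh.eq, hBinvh.eq]
    rw [e0]
    have e1 : (1 : M) + A⁻¹ * D = A⁻¹ * B := by
      have : A + D = B := by rw [hD]; abel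
      rw [← this, mul_add, Matrix.nonsing_inv_mul A hAd]
    have e2 : B⁻¹ * D * B⁻¹ + B⁻¹ * D * A⁻¹ * (D * B⁻¹)
        = B⁻¹ * D * ((1 + A⁻¹ * D) * B⁻¹) := by noncomm_ring
    rw [e2, e1]
    have e3 : B⁻¹ * D * (A⁻¹ * B * B⁻¹) = B⁻¹ * D * A⁻¹ := by
      rw [mul_assoc (A⁻¹) B (B⁻¹), Matrix.mul_nonsing_inv B hBd, mul_one]
    rw [e3, hD, mul_sub, sub_mul, Matrix.nonsing_inv_mul B hBd, mul_assoc,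
      Matrix.mul_nonsing_inv A hAd, one_mul, mul_one]
  rw [key]
  have p1 : (B⁻¹ * D * B⁻¹).PosSemidef := by
    have := h.conjTranspose_mul_mul_same (B := B⁻¹)
    rwa [hBinvh.eq] at this
  have p2 : ((D * B⁻¹)ᴴ * A⁻¹ * (D * B⁻¹)).PosSemidef :=
    hA.inv.posSemidef.conjTranspose_mul_mul_same _
  exact p1.add p2

lemma psd_smul_one {r : ℝ} (hr : 0 ≤ r) : (((r:ℂ)) • (1 : M)).PosSemidef :=
  psd_smul Matrix.PosSemidef.one (by exact_mod_cast hr)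

lemma pd_smul_one {r : ℝ} (hr : 0 < r) : (((r:ℂ)) • (1 : M)).PosDef := by
  rw [← real_smul_eq]; exact pd_smul_real Matrix.PosDef.one hr

lemma pd_res {P : M} (hP : P.PosDef) {r : ℝ} (hr : 0 ≤ r) :
    (P + (r:ℂ) • (1:M)).PosDef :=
  hP.add_posSemidef (psd_smul_one hr)

lemma inv_smul_one {r : ℝ} (hr : r ≠ 0) : (((r:ℂ)) • (1 : M))⁻¹ = ((r⁻¹ : ℝ) : ℂ) • (1 : M) := by
  apply Matrix.inv_eq_right_inv
  rw [smul_mul_smul_comm, one_mul]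
  norm_num
  rw [mul_inv_cancel₀ (by exact_mod_cast hr)]
  simp

/-- The function under the integral. -/
noncomputable def F (X P Q : M) (r : ℝ) : ℝ :=
  (Matrix.trace (Xᴴ * (P + (r : ℂ) • 1)⁻¹ * X * (Q + (r : ℂ) • 1)⁻¹)).re

lemma res_antitone {P : M} (hP : P.PosDef) {r : ℝ} (hr : 0 ≤ r) :
    (P⁻¹ - (P + (r:ℂ) • (1:M))⁻¹).PosSemidef := by
  have hps : ((P + (r:ℂ) • (1:M)) - P).PosSemidef := by
    simpa using psd_smul_one (d := d) hr
  exact inv_antitone hP (pd_res hP hr) hps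

lemma F_nonneg (X : M) {P Q : M} (hP : P.PosDef) (hQ : Q.PosDef) {r : ℝ} (hr : 0 ≤ r) :
    0 ≤ F X P Q r :=
  trace_form_re_nonneg X (pd_res hP hr).inv.posSemidef (pd_res hQ hr).inv.posSemidef

lemma F_le_C0 (X : M) {P Q : M} (hP : P.PosDef) (hQ : Q.PosDef) {r : ℝ} (hr : 0 ≤ r) :
    F X P Q r ≤ (Matrix.trace (Xᴴ * P⁻¹ * X * Q⁻¹)).re :=
  trace_form_mono X (res_antitone hP hr) (pd_res hQ hr).inv.posSemidef
    hP.inv.posSemidef (res_antitone hQ hr)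

lemma F_le_inv_sq (X : M) {P Q : M} (hP : P.PosSemidef) (hQ : Q.PosSemidef) {r : ℝ}
    (hr : 0 < r) :
    F X P Q r ≤ r⁻¹ * r⁻¹ * (Matrix.trace (Xᴴ * X)).re := by
  have h1 : ((((r⁻¹:ℝ)):ℂ) • (1:M) - (P + (r:ℂ) • (1:M))⁻¹).PosSemidef := by
    rw [← inv_smul_one hr.ne']
    exact inv_antitone (pd_smul_one hr) (Matrix.PosDef.posSemidef_add hP (pd_smul_one hr)) (by simpa using hP)
  have h2 : (((r⁻¹:ℝ):ℂ) • (1:M) - (Q + (r:ℂ) • (1:M))⁻¹).PosSemidef := by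
    rw [← inv_smul_one hr.ne']
    exact inv_antitone (pd_smul_one hr) (Matrix.PosDef.posSemidef_add hQ (pd_smul_one hr)) (by simpa using hQ)
  have hBpsd : ((Q + (r:ℂ) • (1:M))⁻¹).PosSemidef :=
    (Matrix.PosDef.posSemidef_add hQ (pd_smul_one hr)).inv.posSemidef
  have hA' : ((((r⁻¹:ℝ)):ℂ) • (1:M)).PosSemidef :=
    psd_smul_one (inv_nonneg.mpr hr.le)
  have hm := trace_form_mono X h1 hBpsd hA' h2
  have e : Xᴴ * ((((r⁻¹:ℝ)):ℂ) • (1:M)) * X * ((((r⁻¹:ℝ)):ℂ) • (1:M))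
      = ((((r⁻¹ * r⁻¹ : ℝ)):ℂ)) • (Xᴴ * X) := by
    simp only [mul_smul_comm, smul_mul_assoc, mul_one, smul_smul]
    norm_cast
  rw [e, trace_smul, smul_eq_mul] at hm
  calc F X P Q r ≤ _ := hm
    _ = r⁻¹ * r⁻¹ * (Matrix.trace (Xᴴ * X)).re := Complex.re_ofReal_mul _ _

lemma contOn_inv {P : M} (hP : P.PosDef) :
    ContinuousOn (fun r : ℝ => (P + (r:ℂ) • (1:M))⁻¹) (Ioi 0) := by
  have hA : Continuous fun r : ℝ => P + (r:ℂ) • (1:M) :=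
    continuous_const.add (Complex.continuous_ofReal.smul continuous_const)
  have heq : (fun r : ℝ => (P + (r:ℂ) • (1:M))⁻¹)
      = fun r : ℝ => ((P + (r:ℂ) • (1:M)).det)⁻¹ • (P + (r:ℂ) • (1:M)).adjugate := by
    funext r; rw [Matrix.inv_def, Ring.inverse_eq_inv']
  rw [heq]
  refine ContinuousOn.smul (f := fun r : ℝ => ((P + (r:ℂ) • (1:M)).det)⁻¹) ?_ (hA.matrix_adjugate).continuousOn
  exact (hA.matrix_det.continuousOn).inv₀ fun r hr => (pd_res hP (le_of_lt hr)).det_pos.ne'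

set_option maxHeartbeats 1000000 in
lemma contOnF (X : M) {P Q : M} (hP : P.PosDef) (hQ : Q.PosDef) :
    ContinuousOn (F X P Q) (Ioi 0) := by
  have c1 : ContinuousOn (fun r : ℝ => Xᴴ * (P + (r:ℂ) • (1:M))⁻¹) (Ioi 0) :=
    continuousOn_const.mul (contOn_inv hP)
  have c2 : ContinuousOn (fun r : ℝ => Xᴴ * (P + (r:ℂ) • (1:M))⁻¹ * X) (Ioi 0) :=
    c1.mul continuousOn_const
  have c3 : ContinuousOn
      (fun r : ℝ => Xᴴ * (P + (r:ℂ) • (1:M))⁻¹ * X * (Q + (r:ℂ) • (1:M))⁻¹) (Ioi 0) :=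
    c2.mul (contOn_inv hQ)
  have c4 : ContinuousOn
      (fun r : ℝ => Matrix.trace (Xᴴ * (P + (r:ℂ) • (1:M))⁻¹ * X * (Q + (r:ℂ) • (1:M))⁻¹))
      (Ioi 0) := (continuous_id.matrix_trace).comp_continuousOn c3
  exact Complex.continuous_re.comp_continuousOn c4

lemma integrableF (X : M) {P Q : M} (hP : P.PosDef) (hQ : Q.PosDef) :
    IntegrableOn (F X P Q) (Ioi 0) := by
  have hK : 0 ≤ (Matrix.trace (Xᴴ * X)).re :=
    trace_re_nonneg (posSemidef_conjTranspose_mul_self X)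
  rw [← Ioc_union_Ioi_eq_Ioi (zero_le_one' ℝ)]
  refine IntegrableOn.union ?_ ?_
  · refine Integrable.mono' (g := fun _ => (Matrix.trace (Xᴴ * P⁻¹ * X * Q⁻¹)).re) ?_ ?_ ?_
    · exact integrableOn_const (by simp)
    · exact ((contOnF X hP hQ).mono Ioc_subset_Ioi_self).aestronglyMeasurable measurableSet_Ioc
    · refine (ae_restrict_iff' measurableSet_Ioc).2 (ae_of_all _ fun r hr => ?_)
      rw [Real.norm_eq_abs, abs_of_nonneg (F_nonneg X hP hQ hr.1.le)]
      exact F_le_C0 X hP hQ hr.1.le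
  · refine Integrable.mono' (g := fun r => (Matrix.trace (Xᴴ * X)).re * r ^ (-2:ℝ)) ?_ ?_ ?_
    · exact (integrableOn_Ioi_rpow_of_lt (by norm_num) one_pos).const_mul _
    · exact ((contOnF X hP hQ).mono (Ioi_subset_Ioi zero_le_one)).aestronglyMeasurable
        measurableSet_Ioi
    · refine (ae_restrict_iff' measurableSet_Ioi).2 (ae_of_all _ fun r hr => ?_)
      have hr1 : (1:ℝ) < r := hr
      have hr0 : (0:ℝ) < r := lt_trans one_pos hr1
      rw [Real.norm_eq_abs, abs_of_nonneg (F_nonneg X hP hQ hr0.le)]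
      have hle := F_le_inv_sq X hP.posSemidef hQ.posSemidef hr0
      have e : r ^ (-2:ℝ) = r⁻¹ * r⁻¹ := by
        rw [show (-2:ℝ) = -(2:ℝ) by norm_num, Real.rpow_neg hr0.le,
          show (2:ℝ) = ((2:ℕ):ℝ) by norm_num, Real.rpow_natCast, pow_two, mul_inv]
      show F X P Q r ≤ (Matrix.trace (Xᴴ * X)).re * r ^ (-2:ℝ)
      rw [e]
      calc F X P Q r ≤ r⁻¹ * r⁻¹ * (Matrix.trace (Xᴴ * X)).re := hle
        _ = (Matrix.trace (Xᴴ * X)).re * (r⁻¹ * r⁻¹) := by ring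

lemma inv_scale {c μ : ℝ} (hc : 0 < c) (hμ : 0 < μ) {ρ : M} (hρ : ρ.PosDef) {r : ℝ}
    (hr : 0 < r) :
    ((μ/c) • ρ + (r:ℂ) • (1:M))⁻¹ = (c:ℂ) • ((μ • ρ + ((c*r : ℝ):ℂ) • (1:M))⁻¹) := by
  have hcne : (c:ℂ) ≠ 0 := by exact_mod_cast hc.ne'
  have e : μ • ρ + ((c*r : ℝ):ℂ) • (1:M) = (c:ℂ) • ((μ/c) • ρ + (r:ℂ) • (1:M)) := by
    rw [real_smul_eq μ, real_smul_eq (μ/c), smul_add, smul_smul, smul_smul]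
    congr 2
    · push_cast
      field_simp
    · push_cast
      ring
  have hdet : IsUnit ((μ/c) • ρ + (r:ℂ) • (1:M)).det :=
    isUnit_iff_isUnit_det _ |>.mp (pd_res (pd_smul_real hρ (div_pos hμ hc)) hr.le).isUnit
  have hinv : ((c:ℂ) • ((μ/c) • ρ + (r:ℂ) • (1:M)))⁻¹
      = (c:ℂ)⁻¹ • ((μ/c) • ρ + (r:ℂ) • (1:M))⁻¹ := by
    apply Matrix.inv_eq_right_inv
    rw [smul_mul_smul_comm, Matrix.mul_nonsing_inv _ hdet, mul_inv_cancel₀ hcne, one_smul]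
  rw [e, hinv, smul_smul, mul_inv_cancel₀ hcne, one_smul]

lemma F_scale {c μ₁ μ₂ : ℝ} (hc : 0 < c) (h1 : 0 < μ₁) (h2 : 0 < μ₂) {ρ : M}
    (hρ : ρ.PosDef) (X : M) {r : ℝ} (hr : 0 < r) :
    F X ((μ₁/c) • ρ) ((μ₂/c) • ρ) r = (c*c) * F X (μ₁ • ρ) (μ₂ • ρ) (c*r) := by
  unfold F
  rw [inv_scale hc h1 hρ hr, inv_scale hc h2 hρ hr]
  simp only [mul_smul_comm, smul_mul_assoc, smul_smul, trace_smul, smul_eq_mul,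
    ← Complex.ofReal_mul, Complex.re_ofReal_mul]

end WIC

open WIC

/-- comparison of weighted `L₂`-integrals, Lemma 2.1 of the paper.
If `ρ` and `σ` are positive definite states on `M_d(ℂ)` with `ρ ≤ c·σ` in the Loewner
order for some `c > 0`, then for every matrix `X` and all `μ₁, μ₂ > 0`,
`∫₀^∞ tr(X†(μ₁σ + r)⁻¹ X (μ₂σ + r)⁻¹) dr ≤ c · ∫₀^∞ tr(X†(μ₁ρ + r)⁻¹ X (μ₂ρ + r)⁻¹) dr`. -/
theorem weighted_integral_comparison {d : ℕ} (ρ σ : Matrix (Fin d) (Fin d) ℂ)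
    (hρ : ρ.PosDef) (hρtr : ρ.trace = 1) (hσ : σ.PosDef) (hσtr : σ.trace = 1)
    (c : ℝ) (hc : 0 < c) (hle : (c • σ - ρ).PosSemidef)
    (X : Matrix (Fin d) (Fin d) ℂ) (μ₁ μ₂ : ℝ) (hμ₁ : 0 < μ₁) (hμ₂ : 0 < μ₂) :
    (∫ r in Set.Ioi (0:ℝ),
        (Matrix.trace (Xᴴ * (μ₁ • σ + (r : ℂ) • 1)⁻¹ * X * (μ₂ • σ + (r : ℂ) • 1)⁻¹)).re)
      ≤ c * ∫ r in Set.Ioi (0:ℝ),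
        (Matrix.trace (Xᴴ * (μ₁ • ρ + (r : ℂ) • 1)⁻¹ * X * (μ₂ • ρ + (r : ℂ) • 1)⁻¹)).re := by
  have hσ1 : (μ₁ • σ).PosDef := pd_smul_real hσ hμ₁
  have hσ2 : (μ₂ • σ).PosDef := pd_smul_real hσ hμ₂
  have hρ1 : ((μ₁ / c) • ρ).PosDef := pd_smul_real hρ (div_pos hμ₁ hc)
  have hρ2 : ((μ₂ / c) • ρ).PosDef := pd_smul_real hρ (div_pos hμ₂ hc)
  show (∫ r in Set.Ioi (0:ℝ), F X (μ₁ • σ) (μ₂ • σ) r)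
      ≤ c * ∫ r in Set.Ioi (0:ℝ), F X (μ₁ • ρ) (μ₂ • ρ) r
  have hdiff : ∀ (μ : ℝ), 0 < μ → ∀ (r : ℝ),
      ((μ • σ + (r:ℂ) • 1) - ((μ / c) • ρ + (r:ℂ) • (1 : Matrix (Fin d) (Fin d) ℂ))).PosSemidef := by
    intro μ hμ r
    have e : (μ • σ + (r:ℂ) • 1) - ((μ / c) • ρ + (r:ℂ) • (1 : Matrix (Fin d) (Fin d) ℂ))
        = (μ / c) • (c • σ - ρ) := by
      rw [smul_sub, smul_smul, div_mul_cancel₀ _ hc.ne']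
      abel
    rw [e]
    exact psd_smul_real hle (div_pos hμ hc).le
  have key1 : (∫ r in Set.Ioi (0:ℝ), F X (μ₁ • σ) (μ₂ • σ) r)
      ≤ ∫ r in Set.Ioi (0:ℝ), F X ((μ₁ / c) • ρ) ((μ₂ / c) • ρ) r := by
    refine integral_mono_of_nonneg ?_ (integrableF X hρ1 hρ2) ?_
    · exact (ae_restrict_iff' measurableSet_Ioi).2
        (Filter.Eventually.of_forall fun r hr => F_nonneg X hσ1 hσ2 (le_of_lt hr))
    · refine (ae_restrict_iff' measurableSet_Ioi).2
        (Filter.Eventually.of_forall fun r hr => ?_)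
      exact trace_form_mono X
        (inv_antitone (pd_res hρ1 (le_of_lt hr)) (pd_res hσ1 (le_of_lt hr)) (hdiff μ₁ hμ₁ r))
        (pd_res hσ2 (le_of_lt hr)).inv.posSemidef
        (pd_res hρ1 (le_of_lt hr)).inv.posSemidef
        (inv_antitone (pd_res hρ2 (le_of_lt hr)) (pd_res hσ2 (le_of_lt hr)) (hdiff μ₂ hμ₂ r))
  have key2 : (∫ r in Set.Ioi (0:ℝ), F X ((μ₁ / c) • ρ) ((μ₂ / c) • ρ) r)
      = c * ∫ r in Set.Ioi (0:ℝ), F X (μ₁ • ρ) (μ₂ • ρ) r := by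
    rw [setIntegral_congr_fun measurableSet_Ioi
      (fun r hr => F_scale hc hμ₁ hμ₂ hρ X (Set.mem_Ioi.mp hr))]
    rw [integral_const_mul]
    rw [integral_comp_mul_left_Ioi (fun s => F X (μ₁ • ρ) (μ₂ • ρ) s) 0 hc]
    rw [mul_zero, smul_eq_mul]
    field_simp
  exact key1.trans (le_of_eq key2)
end

section
/- For every n ≥ 1, there exist at least ⌊n/4⌋ spanning subgraphs G₁, …, G_{⌊n/4⌋} of the complete graph K_n on the vertex set {1, …, n} such that each Gₗ is connected, the edge sets of G₁, …, G_{⌊n/4⌋} are pairwise disjoint, and every vertex has degree at most 3 in each Gₗ. -/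
/-- Lemma 7.9 of the paper: for every `n ≥ 1`, the complete graph
`K_n` contains at least `⌊n/4⌋` spanning connected subgraphs with pairwise disjoint
edge sets and maximum degree at most `3`. -/
theorem complete_graph_disjoint_spanning_subgraphs (n : ℕ) (hn : 1 ≤ n) :
    ∃ G : Fin (n / 4) → SimpleGraph (Fin n),
      (∀ l, (G l).Connected) ∧
      (∀ l l', l ≠ l' → Disjoint ((G l).edgeSet) ((G l').edgeSet)) ∧
      (∀ l v, ((G l).neighborSet v).ncard ≤ 3) := by
  open Fin.NatCast Fin.CommRing in
  haveI : NeZero n := ⟨by omega⟩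
  set G : Fin (n / 4) → SimpleGraph (Fin n) := fun l =>
    SimpleGraph.fromRel (fun a b =>
      a + b = ((2 * l.val : ℕ) : Fin n) ∨ a + b = ((2 * l.val + 1 : ℕ) : Fin n)) with hG
  refine ⟨G, ?_, ?_, ?_⟩
  · -- connectedness
    intro l
    set b0 : Fin n := ((l.val : ℕ) : Fin n) with hb0
    have hc : ((2 * l.val : ℕ) : Fin n) = b0 + b0 := by push_cast [two_mul]; ring
    have hc1 : ((2 * l.val + 1 : ℕ) : Fin n) = b0 + b0 + 1 := by push_cast [two_mul]; ring
    have key : ∀ i : ℕ, (G l).Reachable b0 (b0 + (i : Fin n)) ∧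
        (G l).Reachable b0 (b0 - (i : Fin n)) := by
      intro i
      induction i with
      | zero =>
        simp only [Nat.cast_zero, add_zero, sub_zero]
        exact ⟨.rfl, .rfl⟩
      | succ i ih =>
        have h1 : (G l).Reachable b0 (b0 + ((i + 1 : ℕ) : Fin n)) := by
          by_cases h : b0 - (i : Fin n) = b0 + ((i + 1 : ℕ) : Fin n)
          · rw [← h]; exact ih.2
          · refine ih.2.trans (SimpleGraph.Adj.reachable ?_)
            rw [hG]
            simp only [SimpleGraph.fromRel_adj]
            exact ⟨h, Or.inl (Or.inr (by rw [hc1]; push_cast; ring))⟩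
        refine ⟨h1, ?_⟩
        by_cases h : b0 + ((i + 1 : ℕ) : Fin n) = b0 - ((i + 1 : ℕ) : Fin n)
        · rw [← h]; exact h1
        · refine h1.trans (SimpleGraph.Adj.reachable ?_)
          rw [hG]
          simp only [SimpleGraph.fromRel_adj]
          exact ⟨h, Or.inl (Or.inl (by rw [hc]; push_cast; ring))⟩
    have reach : ∀ v : Fin n, (G l).Reachable b0 v := by
      intro v
      have h := (key (v - b0).val).1
      rwa [Fin.cast_val_eq_self, add_sub_cancel] at h
    rw [SimpleGraph.connected_iff]
    exact ⟨fun u v => (reach u).symm.trans (reach v), ⟨b0⟩⟩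
  · -- disjointness
    intro l l' hne
    rw [Set.disjoint_left]
    intro e he he'
    induction e with
    | h a b =>
      rw [SimpleGraph.mem_edgeSet, hG, SimpleGraph.fromRel_adj] at he he'
      obtain ⟨hab, h1⟩ := he
      obtain ⟨-, h2⟩ := he'
      have hs1 : a + b = ((2 * l.val : ℕ) : Fin n) ∨ a + b = ((2 * l.val + 1 : ℕ) : Fin n) := by
        rcases h1 with h | h
        · exact h
        · rwa [add_comm b a] at h
      have hs2 : a + b = ((2 * l'.val : ℕ) : Fin n) ∨ a + b = ((2 * l'.val + 1 : ℕ) : Fin n) := by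
        rcases h2 with h | h
        · exact h
        · rwa [add_comm b a] at h
      have hl : l.val < n / 4 := l.isLt
      have hl' : l'.val < n / 4 := l'.isLt
      have hv : l.val ≠ l'.val := fun h => hne (Fin.ext h)
      have cast_inj : ∀ x y : ℕ, x < n → y < n → ((x : ℕ) : Fin n) = ((y : ℕ) : Fin n) → x = y := by
        intro x y hx hy h
        have := congrArg Fin.val h
        rwa [Fin.val_natCast, Fin.val_natCast, Nat.mod_eq_of_lt hx, Nat.mod_eq_of_lt hy] at this
      rcases hs1 with h | h <;> rcases hs2 with h' | h' <;>
        · have := cast_inj _ _ (by omega) (by omega) (h.symm.trans h')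
          omega
  · -- degree bound
    intro l v
    have hsub : (G l).neighborSet v ⊆
        {((2 * l.val : ℕ) : Fin n) - v, ((2 * l.val + 1 : ℕ) : Fin n) - v} := by
      intro w hw
      rw [SimpleGraph.mem_neighborSet, hG, SimpleGraph.fromRel_adj] at hw
      obtain ⟨-, h⟩ := hw
      have hs : v + w = ((2 * l.val : ℕ) : Fin n) ∨ v + w = ((2 * l.val + 1 : ℕ) : Fin n) := by
        rcases h with h | h
        · exact h
        · rwa [add_comm w v] at h
      simp only [Set.mem_insert_iff, Set.mem_singleton_iff]
      rcases hs with h | h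
      · left; rw [← h]; ring
      · right; rw [← h]; ring
    calc ((G l).neighborSet v).ncard
        ≤ ({((2 * l.val : ℕ) : Fin n) - v, ((2 * l.val + 1 : ℕ) : Fin n) - v} : Set (Fin n)).ncard :=
          Set.ncard_le_ncard hsub (Set.toFinite _)
      _ ≤ 2 := by
          refine (Set.ncard_insert_le _ _).trans ?_
          simp
      _ ≤ 3 := by omega
end

section
/- Let H be a finite-dimensional complex inner product space, let E₁, …, E_m be orthogonal projections on H, and let E_J be the orthogonal projection onto the intersection of the ranges of E₁, …, E_m. Suppose each Eᵢ commutes with all but at most g of the other projections E_j (g ≥ 1), and suppose λ ≥ 0 satisfies Σ_{i=1}^m ‖Y − Eᵢ(Y)‖² ≥ λ·‖Y − E_J(Y)‖² for all Y ∈ H. Then the operator norm of the product E_m E_{m−1} ⋯ E₁ minus E_J satisfies ‖E_m E_{m−1} ⋯ E₁ − E_J‖² ≤ 1/(λ/g² + 1). (Detectability lemma.) -/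
open scoped InnerProductSpace

namespace Paper

/-- The operator norm `‖T‖ = sup{‖T x‖ : ‖x‖ ≤ 1}` of a linear map on an inner
product space. -/
noncomputable def opNorm {H : Type*} [NormedAddCommGroup H] [InnerProductSpace ℂ H]
    (T : H →ₗ[ℂ] H) : ℝ :=
  sSup {r : ℝ | ∃ x : H, ‖x‖ ≤ 1 ∧ r = ‖T x‖}

section Aux

variable {H : Type*} [NormedAddCommGroup H] [InnerProductSpace ℂ H]

/-- Pythagoras for an orthogonal projection. -/
lemma proj_pyth (T : H →ₗ[ℂ] H) (hT : T ∘ₗ T = T)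
    (hTsa : ∀ x y : H, ⟪T x, y⟫_ℂ = ⟪x, T y⟫_ℂ) (x : H) :
    ‖x‖ ^ 2 = ‖T x‖ ^ 2 + ‖x - T x‖ ^ 2 := by
  have hTT : T (T x) = T x := congrArg (fun f => f x) hT
  have horth : ⟪T x, x - T x⟫_ℂ = 0 := by
    rw [inner_sub_right, hTsa x x, hTsa x (T x), hTT, sub_self]
  have hx : x = T x + (x - T x) := by abel
  calc ‖x‖ ^ 2 = ‖T x + (x - T x)‖ ^ 2 := by rw [← hx]
    _ = ‖T x‖ ^ 2 + 2 * Complex.re ⟪T x, x - T x⟫_ℂ + ‖x - T x‖ ^ 2 :=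
        norm_add_sq (𝕜 := ℂ) _ _
    _ = ‖T x‖ ^ 2 + ‖x - T x‖ ^ 2 := by rw [horth]; simp

lemma proj_norm_le (T : H →ₗ[ℂ] H) (hT : T ∘ₗ T = T)
    (hTsa : ∀ x y : H, ⟪T x, y⟫_ℂ = ⟪x, T y⟫_ℂ) (x : H) : ‖T x‖ ≤ ‖x‖ := by
  have h := proj_pyth T hT hTsa x
  nlinarith [norm_nonneg (T x), norm_nonneg x, norm_nonneg (x - T x), sq_nonneg (‖x - T x‖)]

lemma proj_compl_norm_le (T : H →ₗ[ℂ] H) (hT : T ∘ₗ T = T)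
    (hTsa : ∀ x y : H, ⟪T x, y⟫_ℂ = ⟪x, T y⟫_ℂ) (x : H) : ‖x - T x‖ ≤ ‖x‖ := by
  have h := proj_pyth T hT hTsa x
  nlinarith [norm_nonneg (T x), norm_nonneg x, norm_nonneg (x - T x)]

end Aux

/-- detectability lemma, Theorem A.1 of the paper. Let
`E₁, …, E_m` be orthogonal projections on a finite-dimensional complex inner product
space, each commuting with all but at most `g` of the others, let `E_J` be the
orthogonal projection onto the intersection of their ranges, and suppose
`Σᵢ ‖Y − Eᵢ Y‖² ≥ λ‖Y − E_J Y‖²` for all `Y`. Then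
`‖E_m ⋯ E₁ − E_J‖² ≤ 1/(λ/g² + 1)`. -/
theorem detectability_lemma {H : Type*} [NormedAddCommGroup H]
    [InnerProductSpace ℂ H] [FiniteDimensional ℂ H]
    {m : ℕ} (E : Fin m → (H →ₗ[ℂ] H))
    (hproj : ∀ i, E i ∘ₗ E i = E i)
    (hsa : ∀ i (x y : H), ⟪(E i) x, y⟫_ℂ = ⟪x, (E i) y⟫_ℂ)
    (EJ : H →ₗ[ℂ] H)
    (hJproj : EJ ∘ₗ EJ = EJ)
    (hJsa : ∀ x y : H, ⟪EJ x, y⟫_ℂ = ⟪x, EJ y⟫_ℂ)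
    (hJrange : ∀ x : H, ∀ i, (E i) (EJ x) = EJ x)
    (hJfix : ∀ x : H, (∀ i, (E i) x = x) → EJ x = x)
    (g : ℕ) (hg : 1 ≤ g)
    (hcomm : ∀ i, Set.ncard {j | j ≠ i ∧ E i ∘ₗ E j ≠ E j ∘ₗ E i} ≤ g)
    (lam : ℝ) (hlam : 0 ≤ lam)
    (hgap : ∀ Y : H, lam * ‖Y - EJ Y‖ ^ 2 ≤ ∑ i, ‖Y - (E i) Y‖ ^ 2) :
    opNorm ((List.ofFn E).foldl (fun acc f => f ∘ₗ acc) LinearMap.id - EJ) ^ 2 ≤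
      1 / (lam / g ^ 2 + 1) := by
  classical
  push_cast
  -- extend the family of projections to ℕ-indexed maps
  set F : ℕ → (H →ₗ[ℂ] H) := fun k => if h : k < m then E ⟨k, h⟩ else LinearMap.id with hF
  have hFof : ∀ k (h : k < m), F k = E ⟨k, h⟩ := fun k h => dif_pos h
  have hFproj : ∀ k, F k ∘ₗ F k = F k := by
    intro k
    by_cases h : k < m
    · rw [hFof k h]; exact hproj _
    · simp [hF, h]
  have hFsa : ∀ k (x y : H), ⟪F k x, y⟫_ℂ = ⟪x, F k y⟫_ℂ := by
    intro k x y
    by_cases h : k < m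
    · rw [hFof k h]; exact hsa _ x y
    · simp [hF, h]
  have hFle : ∀ k (z : H), ‖F k z‖ ≤ ‖z‖ := fun k z =>
    proj_norm_le (F k) (hFproj k) (hFsa k) z
  have hQle : ∀ k (z : H), ‖z - F k z‖ ≤ ‖z‖ := fun k z =>
    proj_compl_norm_le (F k) (hFproj k) (hFsa k) z
  -- partial products
  set P : ℕ → (H →ₗ[ℂ] H) :=
    fun k => ((List.ofFn E).take k).foldl (fun acc f => f ∘ₗ acc) LinearMap.id with hP
  have hP0 : P 0 = LinearMap.id := by simp [hP]
  have hPs : ∀ k, k < m → P (k + 1) = F k ∘ₗ P k := by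
    intro k hk
    have hk' : k < (List.ofFn E).length := by simpa using hk
    rw [hP]
    simp only [List.take_succ, List.getElem?_eq_getElem hk', List.foldl_append,
      List.getElem_ofFn, Option.toList_some, List.foldl_cons, List.foldl_nil]
    rw [hFof k hk]
  have hPm : P m = (List.ofFn E).foldl (fun acc f => f ∘ₗ acc) LinearMap.id := by
    simp only [hP]
    rw [List.take_of_length_le (by simp)]
  -- EJ absorbs each projection on both sides
  have hEJF : ∀ k (x : H), EJ (F k x) = EJ x := by
    intro k x
    by_cases h : k < m
    · rw [hFof k h]
      apply ext_inner_right ℂ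
      intro v
      rw [hJsa, hsa, hJrange, ← hJsa]
    · simp [hF, h]
  have hFEJ : ∀ k (x : H), F k (EJ x) = EJ x := by
    intro k x
    by_cases h : k < m
    · rw [hFof k h]; exact hJrange x _
    · simp [hF, h]
  have hEJP : ∀ (x : H) n, n ≤ m → EJ (P n x) = EJ x := by
    intro x n
    induction n with
    | zero => intro _; rw [hP0]; rfl
    | succ n ih =>
      intro h
      have hn : n < m := h
      rw [hPs n hn, LinearMap.comp_apply, hEJF, ih (le_of_lt hn)]
  have hPEJ : ∀ (x : H) n, n ≤ m → P n (EJ x) = EJ x := by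
    intro x n
    induction n with
    | zero => intro _; rw [hP0]; rfl
    | succ n ih =>
      intro h
      have hn : n < m := h
      rw [hPs n hn, LinearMap.comp_apply, ih (le_of_lt hn), hFEJ]
  -- gap hypothesis in ℕ-indexed form
  have hgap' : ∀ Y : H, lam * ‖Y - EJ Y‖ ^ 2 ≤ ∑ k ∈ Finset.range m, ‖Y - F k Y‖ ^ 2 := by
    intro Y
    refine le_trans (hgap Y) (le_of_eq ?_)
    rw [← Fin.sum_univ_eq_sum_range (fun k => ‖Y - F k Y‖ ^ 2) m]
    refine Finset.sum_congr rfl fun i _ => ?_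
    rw [hFof i.1 i.2, Fin.eta]
  have hgpos : (0 : ℝ) < (g : ℝ) := by exact_mod_cast Nat.lt_of_lt_of_le Nat.zero_lt_one hg
  -- the key estimate
  have key : ∀ ψ : H, EJ ψ = 0 →
      (lam + (g : ℝ) ^ 2) * ‖P m ψ‖ ^ 2 ≤ (g : ℝ) ^ 2 * ‖ψ‖ ^ 2 := by
    intro ψ hψ
    set t : ℕ → ℝ := fun k => ‖P k ψ - F k (P k ψ)‖ with ht
    have htnn : ∀ k, 0 ≤ t k := fun k => norm_nonneg _
    -- telescoping
    have tele : ∀ n, n ≤ m →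
        ‖P n ψ‖ ^ 2 + ∑ k ∈ Finset.range n, t k ^ 2 = ‖ψ‖ ^ 2 := by
      intro n
      induction n with
      | zero => intro _; simp [hP0]
      | succ n ih =>
        intro h
        have hn : n < m := h
        have hp := proj_pyth (F n) (hFproj n) (hFsa n) (P n ψ)
        rw [Finset.sum_range_succ, hPs n hn, LinearMap.comp_apply]
        have hih := ih (le_of_lt hn)
        have htn2 : t n ^ 2 = ‖P n ψ - F n (P n ψ)‖ ^ 2 := rfl
        linarith [hih, hp, htn2]
    -- the moving-projections claim
    have claim : ∀ i, i < m → ∀ k, i + 1 ≤ k → k ≤ m →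
        ‖P k ψ - F i (P k ψ)‖ ≤
          ∑ j ∈ (Finset.range k).filter (fun j => j ≠ i ∧ F i ∘ₗ F j ≠ F j ∘ₗ F i), t j := by
      intro i hi k hik
      induction k, hik using Nat.le_induction with
      | base =>
        intro _
        rw [hPs i hi, LinearMap.comp_apply]
        have hii : F i (F i (P i ψ)) = F i (P i ψ) :=
          congrArg (fun f => f (P i ψ)) (hFproj i)
        rw [hii, sub_self, norm_zero]
        exact Finset.sum_nonneg fun j _ => htnn j
      | succ k hik ih =>
        intro hkm
        have hklt : k < m := hkm
        have ihk := ih (le_of_lt hklt)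
        rw [hPs k hklt, LinearMap.comp_apply]
        by_cases hc : F i ∘ₗ F k = F k ∘ₗ F i
        · have hcy : F i (F k (P k ψ)) = F k (F i (P k ψ)) :=
            congrArg (fun f => f (P k ψ)) hc
          have heq : F k (P k ψ) - F i (F k (P k ψ)) = F k (P k ψ - F i (P k ψ)) := by
            rw [map_sub, hcy]
          rw [heq]
          refine le_trans (hFle k _) (le_trans ihk ?_)
          refine Finset.sum_le_sum_of_subset_of_nonneg
            (Finset.filter_subset_filter _ (Finset.range_subset_range.mpr (Nat.le_succ k)))
            fun j _ _ => htnn j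
        · have hkne : k ≠ i := by omega
          have hsplit : F k (P k ψ) - F i (F k (P k ψ))
              = (P k ψ - F i (P k ψ)) - ((P k ψ - F k (P k ψ)) - F i (P k ψ - F k (P k ψ))) := by
            simp only [map_sub]
            abel
          have hnorm : ‖F k (P k ψ) - F i (F k (P k ψ))‖ ≤ ‖P k ψ - F i (P k ψ)‖ + t k := by
            rw [hsplit]
            refine le_trans (norm_sub_le _ _) ?_
            have h1 := proj_compl_norm_le (F i) (hFproj i) (hFsa i) (P k ψ - F k (P k ψ))
            have ht' : t k = ‖P k ψ - F k (P k ψ)‖ := rfl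
            rw [ht']
            linarith
          have hsum : ∑ j ∈ (Finset.range (k + 1)).filter
                (fun j => j ≠ i ∧ F i ∘ₗ F j ≠ F j ∘ₗ F i), t j
              = t k + ∑ j ∈ (Finset.range k).filter
                (fun j => j ≠ i ∧ F i ∘ₗ F j ≠ F j ∘ₗ F i), t j := by
            rw [Finset.range_add_one, Finset.filter_insert, if_pos ⟨hkne, hc⟩,
              Finset.sum_insert (by simp)]
          rw [hsum]
          linarith [hnorm, ihk]
    -- neighbor sets and their cardinality
    set N : ℕ → Finset ℕ :=
      fun i => (Finset.range m).filter (fun j => j ≠ i ∧ F i ∘ₗ F j ≠ F j ∘ₗ F i) with hN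
    have cardN : ∀ i, i < m → (N i).card ≤ g := by
      intro i hi
      have h := hcomm ⟨i, hi⟩
      have himg : N i = Finset.image Fin.val
          (Finset.univ.filter
            (fun j : Fin m => j ≠ ⟨i, hi⟩ ∧ E ⟨i, hi⟩ ∘ₗ E j ≠ E j ∘ₗ E ⟨i, hi⟩)) := by
        ext j
        simp only [hN, Finset.mem_filter, Finset.mem_range, Finset.mem_image,
          Finset.mem_univ, true_and]
        constructor
        · rintro ⟨hjm, hji, hnc⟩
          refine ⟨⟨j, hjm⟩, ⟨?_, ?_⟩, rfl⟩
          · simp only [ne_eq, Fin.mk.injEq]; exact hji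
          · rw [← hFof i hi, ← hFof j hjm]; exact hnc
        · rintro ⟨⟨jv, hjv⟩, ⟨hne, hnc⟩, rfl⟩
          refine ⟨hjv, ?_, ?_⟩
          · intro hji
            exact hne (Fin.ext hji)
          · rw [← hFof i hi, ← hFof jv hjv] at hnc
            exact hnc
      rw [himg, Finset.card_image_of_injective _ Fin.val_injective]
      have hcard : {j : Fin m | j ≠ ⟨i, hi⟩ ∧ E ⟨i, hi⟩ ∘ₗ E j ≠ E j ∘ₗ E ⟨i, hi⟩}.ncard
          = (Finset.univ.filter
            (fun j : Fin m => j ≠ ⟨i, hi⟩ ∧ E ⟨i, hi⟩ ∘ₗ E j ≠ E j ∘ₗ E ⟨i, hi⟩)).card := by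
        rw [Set.ncard_eq_toFinset_card', Set.toFinset_setOf]
      omega
    have hNsub : ∀ i, N i ⊆ Finset.range m := fun i => Finset.filter_subset _ _
    -- the double-counting step
    have swap : ∑ i ∈ Finset.range m, ∑ j ∈ N i, t j ^ 2
        ≤ (g : ℝ) * ∑ j ∈ Finset.range m, t j ^ 2 := by
      have hswap : ∑ i ∈ Finset.range m, ∑ j ∈ N i, t j ^ 2
          = ∑ j ∈ Finset.range m, ((N j).card : ℝ) * t j ^ 2 := by
        have h1 : ∀ i, ∑ j ∈ N i, t j ^ 2
            = ∑ j ∈ Finset.range m,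
                (if j ≠ i ∧ F i ∘ₗ F j ≠ F j ∘ₗ F i then t j ^ 2 else 0) := by
          intro i
          simp only [hN]
          rw [Finset.sum_filter]
        rw [Finset.sum_congr rfl fun i _ => h1 i, Finset.sum_comm]
        refine Finset.sum_congr rfl fun j hj => ?_
        have h2 : ∀ i, (j ≠ i ∧ F i ∘ₗ F j ≠ F j ∘ₗ F i)
            ↔ (i ≠ j ∧ F j ∘ₗ F i ≠ F i ∘ₗ F j) := by
          intro i
          constructor
          · rintro ⟨a, b⟩; exact ⟨a.symm, fun h => b h.symm⟩
          · rintro ⟨a, b⟩; exact ⟨a.symm, fun h => b h.symm⟩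
        calc ∑ i ∈ Finset.range m,
              (if j ≠ i ∧ F i ∘ₗ F j ≠ F j ∘ₗ F i then t j ^ 2 else 0)
            = ∑ i ∈ Finset.range m,
              (if i ≠ j ∧ F j ∘ₗ F i ≠ F i ∘ₗ F j then t j ^ 2 else 0) := by
              refine Finset.sum_congr rfl fun i _ => ?_
              rw [if_congr (h2 i) rfl rfl]
          _ = ∑ i ∈ N j, t j ^ 2 := by simp only [hN]; rw [Finset.sum_filter]
          _ = ((N j).card : ℝ) * t j ^ 2 := by
              rw [Finset.sum_const, nsmul_eq_mul]
      rw [hswap, Finset.mul_sum]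
      refine Finset.sum_le_sum fun j hj => ?_
      have hjm : j < m := Finset.mem_range.mp hj
      have hcg : ((N j).card : ℝ) ≤ (g : ℝ) := by exact_mod_cast cardN j hjm
      exact mul_le_mul_of_nonneg_right hcg (sq_nonneg _)
    -- put it together
    have total : ∑ i ∈ Finset.range m, ‖P m ψ - F i (P m ψ)‖ ^ 2
        ≤ (g : ℝ) ^ 2 * (‖ψ‖ ^ 2 - ‖P m ψ‖ ^ 2) := by
      have step1 : ∑ i ∈ Finset.range m, ‖P m ψ - F i (P m ψ)‖ ^ 2
          ≤ ∑ i ∈ Finset.range m, (g : ℝ) * ∑ j ∈ N i, t j ^ 2 := by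
        refine Finset.sum_le_sum fun i hi => ?_
        have him : i < m := Finset.mem_range.mp hi
        have hclaim := claim i him m him (le_refl m)
        have hNi : N i = (Finset.range m).filter
            (fun j => j ≠ i ∧ F i ∘ₗ F j ≠ F j ∘ₗ F i) := rfl
        rw [← hNi] at hclaim
        have hcs : (∑ j ∈ N i, t j) ^ 2 ≤ ((N i).card : ℝ) * ∑ j ∈ N i, t j ^ 2 := by
          exact_mod_cast sq_sum_le_card_mul_sum_sq (s := N i) (f := t)
        have hsq : ‖P m ψ - F i (P m ψ)‖ ^ 2 ≤ (∑ j ∈ N i, t j) ^ 2 := by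
          have h1 : (0 : ℝ) ≤ ‖P m ψ - F i (P m ψ)‖ := norm_nonneg _
          have h2 := hclaim
          nlinarith [h1, h2, Finset.sum_nonneg (fun j (_ : j ∈ N i) => htnn j)]
        have hcg : ((N i).card : ℝ) ≤ (g : ℝ) := by exact_mod_cast cardN i him
        have hsum_nn : (0 : ℝ) ≤ ∑ j ∈ N i, t j ^ 2 :=
          Finset.sum_nonneg fun j _ => sq_nonneg _
        nlinarith
      calc ∑ i ∈ Finset.range m, ‖P m ψ - F i (P m ψ)‖ ^ 2
          ≤ ∑ i ∈ Finset.range m, (g : ℝ) * ∑ j ∈ N i, t j ^ 2 := step1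
        _ = (g : ℝ) * ∑ i ∈ Finset.range m, ∑ j ∈ N i, t j ^ 2 := by
            rw [Finset.mul_sum]
        _ ≤ (g : ℝ) * ((g : ℝ) * ∑ j ∈ Finset.range m, t j ^ 2) := by
            exact mul_le_mul_of_nonneg_left swap (le_of_lt hgpos)
        _ = (g : ℝ) ^ 2 * (‖ψ‖ ^ 2 - ‖P m ψ‖ ^ 2) := by
            have := tele m (le_refl m)
            have hts : ∑ j ∈ Finset.range m, t j ^ 2 = ‖ψ‖ ^ 2 - ‖P m ψ‖ ^ 2 := by
              linarith
            rw [hts]; ring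
    have hEJPm : EJ (P m ψ) = 0 := by rw [hEJP ψ m (le_refl m), hψ]
    have hg2 := hgap' (P m ψ)
    rw [hEJPm, sub_zero] at hg2
    nlinarith [total, hg2]
  -- conclude the operator-norm bound
  have hB0 : (0 : ℝ) < lam / (g : ℝ) ^ 2 + 1 :=
    add_pos_of_nonneg_of_pos (div_nonneg hlam (by positivity)) one_pos
  have hgne : (g : ℝ) ≠ 0 := ne_of_gt hgpos
  have hden0 : lam + (g : ℝ) ^ 2 ≠ 0 := by nlinarith [hgpos]
  have hBeq : 1 / (lam / (g : ℝ) ^ 2 + 1) = (g : ℝ) ^ 2 / (lam + (g : ℝ) ^ 2) := by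
    rw [eq_div_iff hden0]
    field_simp
  have hbound : ∀ x : H, ‖x‖ ≤ 1 →
      ‖((List.ofFn E).foldl (fun acc f => f ∘ₗ acc) LinearMap.id - EJ) x‖ ^ 2
        ≤ 1 / (lam / (g : ℝ) ^ 2 + 1) := by
    intro x hx
    set ψ := x - EJ x with hψdef
    have hψ0 : EJ ψ = 0 := by
      rw [hψdef, map_sub]
      have := congrArg (fun f => f x) hJproj
      simp only [LinearMap.comp_apply] at this
      rw [this, sub_self]
    have hψn : ‖ψ‖ ≤ 1 :=
      le_trans (proj_compl_norm_le EJ hJproj hJsa x) hx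
    have happ : ((List.ofFn E).foldl (fun acc f => f ∘ₗ acc) LinearMap.id - EJ) x = P m ψ := by
      rw [LinearMap.sub_apply, ← hPm, hψdef, map_sub, hPEJ x m (le_refl m)]
    have hden : (0 : ℝ) < lam + (g : ℝ) ^ 2 := by nlinarith [hgpos]
    rw [happ, hBeq, le_div_iff₀ hden]
    have hk := key ψ hψ0
    have hψsq : ‖ψ‖ ^ 2 ≤ 1 := by nlinarith [norm_nonneg ψ, hψn]
    calc ‖P m ψ‖ ^ 2 * (lam + (g : ℝ) ^ 2) = (lam + (g : ℝ) ^ 2) * ‖P m ψ‖ ^ 2 :=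
          mul_comm _ _
      _ ≤ (g : ℝ) ^ 2 * ‖ψ‖ ^ 2 := hk
      _ ≤ (g : ℝ) ^ 2 := mul_le_of_le_one_right (by positivity) hψsq
  -- sup argument
  have hBnn : (0 : ℝ) ≤ 1 / (lam / (g : ℝ) ^ 2 + 1) := le_of_lt (by positivity)
  set T := (List.ofFn E).foldl (fun acc f => f ∘ₗ acc) LinearMap.id - EJ with hT
  set S := {r : ℝ | ∃ x : H, ‖x‖ ≤ 1 ∧ r = ‖T x‖} with hS
  have h0S : (0 : ℝ) ∈ S := ⟨0, by simp, by rw [map_zero, norm_zero]⟩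
  have hub : ∀ r ∈ S, r ≤ Real.sqrt (1 / (lam / (g : ℝ) ^ 2 + 1)) := by
    rintro r ⟨x, hx, rfl⟩
    calc ‖T x‖ = Real.sqrt (‖T x‖ ^ 2) := (Real.sqrt_sq (norm_nonneg _)).symm
      _ ≤ Real.sqrt (1 / (lam / (g : ℝ) ^ 2 + 1)) := Real.sqrt_le_sqrt (hbound x hx)
  have hsup_le : sSup S ≤ Real.sqrt (1 / (lam / (g : ℝ) ^ 2 + 1)) :=
    Real.sSup_le hub (Real.sqrt_nonneg _)
  have h0 : 0 ≤ sSup S :=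
    le_csSup ⟨Real.sqrt (1 / (lam / (g : ℝ) ^ 2 + 1)), fun r hr => hub r hr⟩ h0S
  have : opNorm T = sSup S := rfl
  rw [this]
  calc (sSup S) ^ 2 ≤ (Real.sqrt (1 / (lam / (g : ℝ) ^ 2 + 1))) ^ 2 := by
        exact pow_le_pow_left₀ h0 hsup_le 2
    _ = 1 / (lam / (g : ℝ) ^ 2 + 1) := Real.sq_sqrt hBnn

end Paper
end

section
/- Let N ⊆ M_d(ℂ) be a unital *-subalgebra with trace-preserving conditional expectation E onto N, and let Φ : M_d(ℂ) → M_d(ℂ) be a quantum channel with Φ ∘ E = E ∘ Φ = E. For a linear map Ψ let J_Ψ := (id ⊗ Ψ)(|ψ⟩⟨ψ|) be its Choi matrix, with |ψ⟩ := (1/√d)·Σᵢ |i⟩|i⟩, and let P be the support projection of J_E. Suppose J_E ≥ C_E⁻¹·P in the Loewner order for some C_E > 0, that the support of J_{Φ^k} is contained in the range of P for every k ∈ ℕ, and that λ := ‖Φ − E‖ < 1, the operator norm with respect to the Hilbert–Schmidt norm on M_d(ℂ). Then for every integer k > ln(C_E)/(−ln λ), setting ε := λ^k·C_E (so ε < 1),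 one has (1−ε)·E ≤_cp Φ^k ≤_cp (1+ε)·E, i.e. both Φ^k − (1−ε)·E and (1+ε)·E − Φ^k are completely positive. -/
open scoped ComplexOrder
open MeasureTheory Matrix

namespace Paper

variable {ι : Type*} [Fintype ι] [DecidableEq ι]

/-- Matrix logarithm via functional calculus on Hermitian matrices (junk value `0` otherwise;
the convention `Real.log 0 = 0` implements `0·log 0 = 0` on the kernel). -/
noncomputable def mlog (A : Matrix ι ι ℂ) : Matrix ι ι ℂ :=
  if h : A.IsHermitian then
    (h.eigenvectorUnitary : Matrix ι ι ℂ) *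
      Matrix.diagonal (fun i => (Real.log (h.eigenvalues i) : ℂ)) *
      star (h.eigenvectorUnitary : Matrix ι ι ℂ)
  else 0

/-- Quantum relative entropy `D(ρ‖σ) = tr(ρ log ρ − ρ log σ)`. -/
noncomputable def relEnt (ρ σ : Matrix ι ι ℂ) : ℝ :=
  (Matrix.trace (ρ * mlog ρ - ρ * mlog σ)).re

/-- A state is a positive semidefinite matrix of trace one. -/
def IsState (ρ : Matrix ι ι ℂ) : Prop := ρ.PosSemidef ∧ ρ.trace = 1

/-- The weighted norm `‖X‖²_{ω⁻¹} = ∫₀^∞ tr(X†(ω+s)⁻¹X(ω+s)⁻¹) ds`. -/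
noncomputable def invNormSq (ω X : Matrix ι ι ℂ) : ℝ :=
  ∫ s in Set.Ioi (0:ℝ),
    (Matrix.trace (Xᴴ * (ω + (s : ℂ) • 1)⁻¹ * X * (ω + (s : ℂ) • 1)⁻¹)).re


/-- Choi matrix `(id ⊗ Ψ)(|ψ⟩⟨ψ|)` of a map `Ψ`, where `|ψ⟩` is the maximally
entangled unit vector. -/
noncomputable def choi (Ψ : Matrix ι ι ℂ → Matrix ι ι ℂ) :
    Matrix (ι × ι) (ι × ι) ℂ :=
  Matrix.of fun p q =>
    ((Fintype.card ι : ℂ))⁻¹ * Ψ (Matrix.single p.1 q.1 1) p.2 q.2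

/-- A map is completely positive iff its Choi matrix is positive semidefinite. -/
def IsCP (Ψ : Matrix ι ι ℂ → Matrix ι ι ℂ) : Prop := (choi Ψ).PosSemidef

/-- `E` is a conditional expectation onto the unital *-subalgebra `N`: a unital
completely positive idempotent linear map with range `N` which is `N`-bimodular. -/
def IsCondExp (N : StarSubalgebra ℂ (Matrix ι ι ℂ))
    (E : Matrix ι ι ℂ → Matrix ι ι ℂ) : Prop :=
  IsLinearMap ℂ E ∧ E 1 = 1 ∧ IsCP E ∧ (∀ X, E X ∈ N) ∧ (∀ X ∈ N, E X = X) ∧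
    ∀ a ∈ N, ∀ b ∈ N, ∀ X, E (a * X * b) = a * E X * b

/-- The tensor product `Ψ₁ ⊗ Ψ₂` of two (linear) maps of matrix algebras, acting on
the matrix algebra of the product index type. -/
noncomputable def tmap {κ : Type*} [Fintype κ] [DecidableEq κ]
    (Ψ₁ : Matrix ι ι ℂ → Matrix ι ι ℂ) (Ψ₂ : Matrix κ κ ℂ → Matrix κ κ ℂ)
    (ρ : Matrix (ι × κ) (ι × κ) ℂ) : Matrix (ι × κ) (ι × κ) ℂ :=
  ∑ i : ι, ∑ k : ι,
    Matrix.of fun p q =>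
      Ψ₁ (Matrix.single i k 1) p.1 q.1 *
      Ψ₂ (Matrix.of fun j l => ρ (i, j) (k, l)) p.2 q.2

/-- Squared Hilbert–Schmidt norm. -/
noncomputable def hsNormSq (X : Matrix ι ι ℂ) : ℝ := (Matrix.trace (Xᴴ * X)).re

/-- Hilbert–Schmidt norm. -/
noncomputable def hsNorm (X : Matrix ι ι ℂ) : ℝ := Real.sqrt (hsNormSq X)

/-- Operator norm of a map on `M_d(ℂ)` with respect to the Hilbert–Schmidt norm. -/
noncomputable def hsOpNorm (Ψ : Matrix ι ι ℂ → Matrix ι ι ℂ) : ℝ :=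
  sInf {c : ℝ | 0 ≤ c ∧ ∀ X, hsNorm (Ψ X) ≤ c * hsNorm X}

/-- The trace-preserving conditional expectation onto a unital *-subalgebra `N`:
the orthogonal projection of `M_d(ℂ)` onto `N` for the Hilbert–Schmidt inner product. -/
def IsTraceCondExp (N : StarSubalgebra ℂ (Matrix ι ι ℂ))
    (E : Matrix ι ι ℂ → Matrix ι ι ℂ) : Prop :=
  IsLinearMap ℂ E ∧ (∀ X, E X ∈ N) ∧ (∀ X ∈ N, E X = X) ∧
    ∀ X Y, Matrix.trace ((E X)ᴴ * Y) = Matrix.trace (Xᴴ * E Y)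


/-! ### Auxiliary lemmas for the proof of `cp_order_from_choi_bounds` -/

section Aux

attribute [local instance] Matrix.frobeniusSeminormedAddCommGroup
  Matrix.frobeniusNormedAddCommGroup Matrix.frobeniusNormedSpace

lemma hsNormSq_eq (X : Matrix ι ι ℂ) : hsNormSq X = ∑ i, ∑ j, ‖X i j‖ ^ 2 := by
  simp only [hsNormSq, Matrix.trace, Matrix.diag, Matrix.mul_apply, Matrix.conjTranspose_apply]
  rw [Complex.re_sum, Finset.sum_comm]
  congr 1; ext i
  rw [Complex.re_sum]
  congr 1; ext j
  rw [Complex.sq_norm, Complex.normSq_apply]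
  simp [Complex.mul_re]

lemma hsNormSq_nonneg (X : Matrix ι ι ℂ) : 0 ≤ hsNormSq X := by
  rw [hsNormSq_eq]; positivity

lemma hsNorm_eq_norm (X : Matrix ι ι ℂ) : hsNorm X = ‖X‖ := by
  rw [hsNorm, hsNormSq_eq, Matrix.frobenius_norm_def X, Real.sqrt_eq_rpow]
  norm_num

lemma hsNorm_nonneg (X : Matrix ι ι ℂ) : 0 ≤ hsNorm X := Real.sqrt_nonneg _

lemma hsNormSq_eq_sq_hsNorm (X : Matrix ι ι ℂ) : hsNormSq X = hsNorm X ^ 2 := by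
  rw [hsNorm, Real.sq_sqrt (hsNormSq_nonneg X)]

lemma linmap_sum {M N : Type*} [AddCommMonoid M] [Module ℂ M] [AddCommMonoid N]
    [Module ℂ N] {Ψ : M → N} (hΨ : IsLinearMap ℂ Ψ) {α : Type*} (s : Finset α) (f : α → M) :
    Ψ (∑ i ∈ s, f i) = ∑ i ∈ s, Ψ (f i) :=
  map_sum (IsLinearMap.mk' Ψ hΨ) f s

lemma psi_expand {Ψ : Matrix ι ι ℂ → Matrix ι ι ℂ} (hΨ : IsLinearMap ℂ Ψ)
    (X : Matrix ι ι ℂ) :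
    Ψ X = ∑ i : ι, ∑ j : ι, X i j • Ψ (Matrix.single i j 1) := by
  conv_lhs => rw [Matrix.matrix_eq_sum_single X]
  rw [linmap_sum hΨ]
  refine Finset.sum_congr rfl fun i _ => ?_
  rw [linmap_sum hΨ]
  refine Finset.sum_congr rfl fun j _ => ?_
  rw [← hΨ.map_smul, Matrix.smul_single, smul_eq_mul, mul_one]

lemma entry_le_frobenius (X : Matrix ι ι ℂ) (i j : ι) : ‖X i j‖ ≤ ‖X‖ := by
  have h1 : ‖X i j‖ ^ 2 ≤ ∑ i', ∑ j', ‖X i' j'‖ ^ 2 := by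
    calc ‖X i j‖ ^ 2 ≤ ∑ j', ‖X i j'‖ ^ 2 :=
          Finset.single_le_sum (f := fun j' => ‖X i j'‖ ^ 2)
            (fun _ _ => sq_nonneg _) (Finset.mem_univ j)
      _ ≤ ∑ i', ∑ j', ‖X i' j'‖ ^ 2 :=
          Finset.single_le_sum (f := fun i' => ∑ j', ‖X i' j'‖ ^ 2)
            (fun _ _ => Finset.sum_nonneg fun _ _ => sq_nonneg _) (Finset.mem_univ i)
  have := Real.sqrt_le_sqrt h1
  rwa [Real.sqrt_sq (norm_nonneg _), ← hsNormSq_eq, ← hsNorm, hsNorm_eq_norm] at this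

lemma hsOpNorm_spec {Ψ : Matrix ι ι ℂ → Matrix ι ι ℂ} (hΨ : IsLinearMap ℂ Ψ) :
    0 ≤ hsOpNorm Ψ ∧ ∀ X, hsNorm (Ψ X) ≤ hsOpNorm Ψ * hsNorm X := by
  set S := {c : ℝ | 0 ≤ c ∧ ∀ X, hsNorm (Ψ X) ≤ c * hsNorm X} with hS
  have hne : S.Nonempty := by
    refine ⟨∑ i : ι, ∑ j : ι, ‖Ψ (Matrix.single i j 1)‖,
      Finset.sum_nonneg fun _ _ => Finset.sum_nonneg fun _ _ => norm_nonneg _, fun X => ?_⟩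
    rw [hsNorm_eq_norm, hsNorm_eq_norm, psi_expand hΨ X, Finset.sum_mul]
    refine (norm_sum_le _ _).trans (Finset.sum_le_sum fun i _ => ?_)
    rw [Finset.sum_mul]
    refine (norm_sum_le _ _).trans (Finset.sum_le_sum fun j _ => ?_)
    rw [norm_smul]
    exact mul_le_mul (entry_le_frobenius X i j) le_rfl (norm_nonneg _) (norm_nonneg _)
      |>.trans_eq (mul_comm _ _)
  have hbdd : BddBelow S := ⟨0, fun c hc => hc.1⟩
  have hclosed : IsClosed S := by
    have : S = (Set.Ici 0) ∩ ⋂ X : Matrix ι ι ℂ, {c : ℝ | hsNorm (Ψ X) ≤ c * hsNorm X} := by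
      ext c; simp [hS, Set.mem_iInter, forall_and]
    rw [this]
    exact isClosed_Ici.inter (isClosed_iInter fun X =>
      isClosed_le continuous_const (continuous_id.mul continuous_const))
  have := hclosed.csInf_mem hne hbdd
  exact ⟨this.1, this.2⟩

lemma herm_dot_im_zero {κ : Type*} [Fintype κ] {M : Matrix κ κ ℂ} (hM : M.IsHermitian)
    (v : κ → ℂ) : (star v ⬝ᵥ M.mulVec v).im = 0 := by
  rw [← Complex.conj_eq_iff_im]
  have h0 : star (star v ⬝ᵥ M.mulVec v) = star (M.mulVec v) ⬝ᵥ v :=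
    (Matrix.star_dotProduct _ _).symm
  show (starRingEnd ℂ) _ = _
  rw [show ((starRingEnd ℂ) (star v ⬝ᵥ M.mulVec v)) = star (star v ⬝ᵥ M.mulVec v) from rfl,
    h0, Matrix.star_mulVec, hM.eq, ← Matrix.dotProduct_mulVec]

lemma dot_P_eq {κ : Type*} [Fintype κ] {P : Matrix κ κ ℂ} (hP : P.IsHermitian)
    (M : Matrix κ κ ℂ) (v : κ → ℂ) :
    star v ⬝ᵥ (P * M).mulVec v = star (P.mulVec v) ⬝ᵥ M.mulVec v := by
  rw [Matrix.star_mulVec, hP.eq, ← Matrix.mulVec_mulVec, Matrix.dotProduct_mulVec]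

lemma psd_core {κ : Type*} [Fintype κ] (P M : Matrix κ κ ℂ) (hP : P.IsHermitian)
    (hPi : P * P = P) (hM : M.IsHermitian) (hPM : P * M = M) (b : ℝ) (hb0 : 0 ≤ b)
    (hMb : ∑ p, ∑ q, ‖M p q‖ ^ 2 ≤ b ^ 2) :
    ((b : ℂ) • P - M).PosSemidef ∧ ((b : ℂ) • P + M).PosSemidef := by
  have hMP : M * P = M := by
    have := congrArg Matrix.conjTranspose hPM
    rwa [Matrix.conjTranspose_mul, hP.eq, hM.eq] at this
  have hherm : ((b : ℂ) • P).IsHermitian := by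
    unfold Matrix.IsHermitian
    rw [Matrix.conjTranspose_smul, hP.eq]
    congr 1
    simp [Complex.ext_iff]
  have key : ∀ v : κ → ℂ, (star v ⬝ᵥ M.mulVec v).re ≤ b * (star v ⬝ᵥ P.mulVec v).re ∧
      -(star v ⬝ᵥ M.mulVec v).re ≤ b * (star v ⬝ᵥ P.mulVec v).re := by
    intro v
    set w := P.mulVec v with hw
    have h1 : star v ⬝ᵥ M.mulVec v = star w ⬝ᵥ M.mulVec w := by
      have hPMP : P * (M * P) = M := by rw [← Matrix.mul_assoc, hPM, hMP]
      conv_lhs => rw [← hPMP]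
      rw [dot_P_eq hP, ← Matrix.mulVec_mulVec]
    have h2 : star v ⬝ᵥ P.mulVec v = star w ⬝ᵥ w := by
      conv_lhs => rw [← hPi, dot_P_eq hP]
    have h2re : (star v ⬝ᵥ P.mulVec v).re = ∑ i, ‖w i‖ ^ 2 := by
      rw [h2, dotProduct, Complex.re_sum]
      refine Finset.sum_congr rfl fun i _ => ?_
      simp [Pi.star_apply, Complex.mul_re, Complex.sq_norm,
        Complex.normSq_apply]
    have habs : ‖(star w ⬝ᵥ M.mulVec w)‖ ≤ b * ∑ i, ‖w i‖ ^ 2 := by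
      have e1 : star w ⬝ᵥ M.mulVec w = ∑ p, ∑ q, star (w p) * M p q * w q := by
        simp [dotProduct, Matrix.mulVec, Finset.mul_sum, mul_assoc]
      rw [e1]
      have step1 : ‖(∑ p, ∑ q, star (w p) * M p q * w q)‖ ≤
          ∑ p, ∑ q, ‖M p q‖ * (‖w p‖ * ‖w q‖) := by
        refine (norm_sum_le _ _).trans (Finset.sum_le_sum fun p _ => ?_)
        refine (norm_sum_le _ _).trans (Finset.sum_le_sum fun q _ => ?_)
        rw [norm_mul, norm_mul, norm_star]
        exact le_of_eq (by ring)
      refine step1.trans ?_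
      have cs := Finset.sum_mul_sq_le_sq_mul_sq Finset.univ
        (fun pq : κ × κ => ‖M pq.1 pq.2‖) (fun pq : κ × κ => ‖w pq.1‖ * ‖w pq.2‖)
      have e2 : ∑ p, ∑ q, ‖M p q‖ * (‖w p‖ * ‖w q‖) =
          ∑ pq : κ × κ, ‖M pq.1 pq.2‖ * (‖w pq.1‖ * ‖w pq.2‖) := by
        rw [Fintype.sum_prod_type]
      have e3 : ∑ pq : κ × κ, (‖w pq.1‖ * ‖w pq.2‖) ^ 2 = (∑ i, ‖w i‖ ^ 2) ^ 2 := by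
        rw [sq (∑ i, ‖w i‖ ^ 2), Finset.sum_mul_sum, Fintype.sum_prod_type]
        simp [mul_pow]
      have e4 : ∑ pq : κ × κ, ‖M pq.1 pq.2‖ ^ 2 = ∑ p, ∑ q, ‖M p q‖ ^ 2 := by
        rw [Fintype.sum_prod_type]
      set A := ∑ pq : κ × κ, ‖M pq.1 pq.2‖ * (‖w pq.1‖ * ‖w pq.2‖) with hA
      have hAnn : 0 ≤ A := Finset.sum_nonneg fun _ _ => by positivity
      have hsq : A ^ 2 ≤ b ^ 2 * (∑ i, ‖w i‖ ^ 2) ^ 2 := by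
        calc A ^ 2 ≤ (∑ pq : κ × κ, ‖M pq.1 pq.2‖ ^ 2) *
              (∑ pq : κ × κ, (‖w pq.1‖ * ‖w pq.2‖) ^ 2) := by
              simpa [hA, mul_comm] using cs
          _ ≤ b ^ 2 * (∑ i, ‖w i‖ ^ 2) ^ 2 := by
              rw [e3, e4]
              exact mul_le_mul_of_nonneg_right hMb (by positivity)
      rw [e2]
      calc A = Real.sqrt (A ^ 2) := by rw [Real.sqrt_sq hAnn]
        _ ≤ Real.sqrt (b ^ 2 * (∑ i, ‖w i‖ ^ 2) ^ 2) := Real.sqrt_le_sqrt hsq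
        _ = b * ∑ i, ‖w i‖ ^ 2 := by
            rw [Real.sqrt_mul (by positivity), Real.sqrt_sq hb0,
              Real.sqrt_sq (by positivity)]
    have hre : |(star w ⬝ᵥ M.mulVec w).re| ≤ b * ∑ i, ‖w i‖ ^ 2 :=
      (Complex.abs_re_le_norm _).trans habs
    rw [h1, h2re]
    exact ⟨(le_abs_self _).trans hre, (neg_le_abs _).trans hre⟩
  constructor
  · refine PosSemidef.of_dotProduct_mulVec_nonneg (hherm.sub hM) fun v => ?_
    rw [Matrix.sub_mulVec, dotProduct_sub, Matrix.smul_mulVec,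
      dotProduct_smul]
    rw [Complex.le_def]
    constructor
    · simp only [Complex.sub_re, Complex.zero_re, smul_eq_mul, Complex.mul_re,
        Complex.ofReal_re, Complex.ofReal_im, herm_dot_im_zero hP v, zero_mul, sub_zero, mul_zero]
      linarith [(key v).1]
    · simp only [Complex.sub_im, Complex.zero_im, smul_eq_mul, Complex.mul_im,
        Complex.ofReal_re, Complex.ofReal_im, herm_dot_im_zero hP v,
        herm_dot_im_zero hM v, mul_zero, zero_mul, add_zero, sub_zero]
  · refine PosSemidef.of_dotProduct_mulVec_nonneg (hherm.add hM) fun v => ?_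
    rw [Matrix.add_mulVec, dotProduct_add, Matrix.smul_mulVec,
      dotProduct_smul]
    rw [Complex.le_def]
    constructor
    · simp only [Complex.add_re, Complex.zero_re, smul_eq_mul, Complex.mul_re,
        Complex.ofReal_re, Complex.ofReal_im, herm_dot_im_zero hP v, zero_mul, sub_zero, mul_zero]
      linarith [(key v).2]
    · simp only [Complex.add_im, Complex.zero_im, smul_eq_mul, Complex.mul_im,
        Complex.ofReal_re, Complex.ofReal_im, herm_dot_im_zero hP v,
        herm_dot_im_zero hM v, mul_zero, zero_mul, add_zero]

end Aux

section Aux2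

lemma stdBasis_conjT (i j : ι) :
    (Matrix.single i j (1:ℂ))ᴴ = Matrix.single j i 1 := by
  ext a b
  simp only [Matrix.conjTranspose_apply, Matrix.single, Matrix.of_apply]
  split_ifs with h1 h2 h2
  · simp
  · exact absurd ⟨h1.2, h1.1⟩ h2
  · exact absurd ⟨h2.2, h2.1⟩ h1
  · simp

lemma card_ne_zero_of_elem (a : ι) : (Fintype.card ι : ℂ) ≠ 0 := by
  have : Nonempty ι := ⟨a⟩
  exact_mod_cast Nat.cast_ne_zero.2 Fintype.card_ne_zero

lemma conj_card_inv : (starRingEnd ℂ) ((Fintype.card ι : ℂ))⁻¹ = ((Fintype.card ι : ℂ))⁻¹ := by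
  rw [map_inv₀, Complex.conj_natCast]

lemma starpres_of_choi_herm {Ψ : Matrix ι ι ℂ → Matrix ι ι ℂ} (hlin : IsLinearMap ℂ Ψ)
    (h : (choi Ψ).IsHermitian) (X : Matrix ι ι ℂ) : Ψ Xᴴ = (Ψ X)ᴴ := by
  ext a b
  have hcard := card_ne_zero_of_elem a
  have key : ∀ i j : ι, (starRingEnd ℂ) (Ψ (Matrix.single i j 1) b a) =
      Ψ (Matrix.single j i 1) a b := by
    intro i j
    have h0 := congrFun (congrFun h.eq ((j, a) : ι × ι)) ((i, b) : ι × ι)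
    simp only [Matrix.conjTranspose_apply, choi, Matrix.of_apply] at h0
    rw [star_mul', star_inv₀, star_natCast] at h0
    exact mul_left_cancel₀ (inv_ne_zero hcard) h0
  rw [psi_expand hlin Xᴴ, psi_expand hlin X]
  simp only [Matrix.conjTranspose_apply, Matrix.sum_apply, Matrix.smul_apply, smul_eq_mul,
    star_sum, star_mul']
  rw [Finset.sum_comm]
  refine Finset.sum_congr rfl fun i _ => Finset.sum_congr rfl fun j _ => ?_
  congr 1
  exact (key i j).symm

lemma choi_herm_of_starpres {Ψ : Matrix ι ι ℂ → Matrix ι ι ℂ}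
    (h : ∀ X, Ψ Xᴴ = (Ψ X)ᴴ) : (choi Ψ).IsHermitian := by
  refine Matrix.IsHermitian.ext fun p q => ?_
  show (starRingEnd ℂ) (choi Ψ q p) = choi Ψ p q
  simp only [choi, Matrix.of_apply, _root_.map_mul, conj_card_inv]
  congr 1
  have := congrFun (congrFun (congrArg Matrix.conjTranspose
    (h (Matrix.single q.1 p.1 1))) p.2) q.2
  calc (starRingEnd ℂ) (Ψ (Matrix.single q.1 p.1 1) q.2 p.2)
      = (Ψ (Matrix.single q.1 p.1 1))ᴴ p.2 q.2 := rfl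
    _ = Ψ ((Matrix.single q.1 p.1 1)ᴴ) p.2 q.2 := by rw [← h]
    _ = Ψ (Matrix.single p.1 q.1 1) p.2 q.2 := by rw [stdBasis_conjT]

lemma rsmul_eq_csmul {κ : Type*} (r : ℝ) (A : Matrix κ κ ℂ) : r • A = (r : ℂ) • A := by
  ext i j
  simp [Complex.real_smul]

lemma psd_rsmul {κ : Type*} [Fintype κ] {A : Matrix κ κ ℂ} (hA : A.PosSemidef)
    {r : ℝ} (hr : 0 ≤ r) : ((r : ℂ) • A).PosSemidef := by
  refine PosSemidef.of_dotProduct_mulVec_nonneg ?_ ?_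
  · unfold Matrix.IsHermitian
    rw [Matrix.conjTranspose_smul, hA.1.eq]
    congr 1
    simp [Complex.ext_iff]
  · intro v
    rw [Matrix.smul_mulVec, dotProduct_smul]
    have h0 := hA.dotProduct_mulVec_nonneg v
    rw [Complex.le_def] at h0 ⊢
    constructor
    · simp only [Complex.zero_re, smul_eq_mul, Complex.mul_re, Complex.ofReal_re,
        Complex.ofReal_im, zero_mul, sub_zero]
      exact mul_nonneg hr (by simpa using h0.1)
    · have himz : (star v ⬝ᵥ A.mulVec v).im = 0 := by simpa using h0.2.symm
      simp [Complex.mul_im, himz]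

end Aux2

/-- Lemma B.2 of the paper: completely positive order estimates for
powers of a channel from spectral estimates via the Choi matrix. -/
theorem cp_order_from_choi_bounds {d : ℕ}
    (N : StarSubalgebra ℂ (Matrix (Fin d) (Fin d) ℂ))
    (E : Matrix (Fin d) (Fin d) ℂ → Matrix (Fin d) (Fin d) ℂ)
    (hE : IsTraceCondExp N E)
    (Φ : Matrix (Fin d) (Fin d) ℂ → Matrix (Fin d) (Fin d) ℂ)
    (hΦlin : IsLinearMap ℂ Φ) (hΦcp : IsCP Φ) (hΦtr : ∀ A, (Φ A).trace = A.trace)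
    (hΦE : Φ ∘ E = E) (hEΦ : E ∘ Φ = E)
    -- `P` is the support projection of the Choi matrix of `E`
    (P : Matrix ((Fin d) × (Fin d)) ((Fin d) × (Fin d)) ℂ)
    (hPher : P.IsHermitian) (hPidem : P * P = P)
    (hPfix : P * choi E = choi E)
    (hPker : ∀ v, (choi E).mulVec v = 0 → P.mulVec v = 0)
    -- `J_E ≥ C_E⁻¹ P`
    (CE : ℝ) (hCE : 0 < CE) (hJE : (choi E - CE⁻¹ • P).PosSemidef)
    -- the support of `J_{Φ^k}` is contained in the range of `P`
    (hsupp : ∀ k : ℕ, P * choi (Φ^[k]) = choi (Φ^[k]))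
    -- `λ = ‖Φ − E‖ < 1` in Hilbert–Schmidt operator norm
    (lam : ℝ) (hlam : lam = hsOpNorm (fun X => Φ X - E X)) (hlam1 : lam < 1) :
    ∀ k : ℕ, Real.log CE / (-Real.log lam) < k →
      lam ^ k * CE < 1 ∧
      IsCP (fun X => Φ^[k] X - (1 - lam ^ k * CE) • E X) ∧
      IsCP (fun X => (1 + lam ^ k * CE) • E X - Φ^[k] X) := by
  obtain ⟨hElin, hEmem, hEfix, hEadj⟩ := hE
  have hEE : ∀ X, E (E X) = E X := fun X => hEfix _ (hEmem X)
  have hΦE' : ∀ X, Φ (E X) = E X := fun X => congrFun hΦE X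
  have hEΦ' : ∀ X, E (Φ X) = E X := fun X => congrFun hEΦ X
  have hΨlin : IsLinearMap ℂ (fun X => Φ X - E X) := by
    constructor
    · intro x y; simp only [hΦlin.map_add, hElin.map_add]; abel
    · intro c x; simp only [hΦlin.map_smul, hElin.map_smul, smul_sub]
  have hlam0 : 0 ≤ lam := hlam ▸ (hsOpNorm_spec hΨlin).1
  have hlamb : ∀ X, hsNorm (Φ X - E X) ≤ lam * hsNorm X := hlam ▸ (hsOpNorm_spec hΨlin).2
  have hcontr : ∀ X, hsNorm (X - E X) ≤ hsNorm X := by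
    intro X
    have t3 : Matrix.trace ((E X)ᴴ * X) = Matrix.trace (Xᴴ * E X) := hEadj X X
    have t4 : Matrix.trace ((E X)ᴴ * E X) = Matrix.trace (Xᴴ * E X) := by
      rw [hEadj X (E X), hEE]
    have e : ((X - E X)ᴴ * (X - E X)) =
        Xᴴ*X - Xᴴ*(E X) - ((E X)ᴴ*X - (E X)ᴴ*(E X)) := by
      rw [Matrix.conjTranspose_sub, Matrix.sub_mul, Matrix.mul_sub, Matrix.mul_sub]
    have etr : Matrix.trace ((X - E X)ᴴ * (X - E X)) =
        Matrix.trace (Xᴴ*X) - Matrix.trace (Xᴴ * E X) := by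
      rw [e, Matrix.trace_sub, Matrix.trace_sub, Matrix.trace_sub, t3, t4]; ring
    have hnn : 0 ≤ (Matrix.trace (Xᴴ * E X)).re := by
      have h5 := hsNormSq_nonneg (E X)
      unfold hsNormSq at h5
      rw [← t4]; exact h5
    have hle : hsNormSq (X - E X) ≤ hsNormSq X := by
      unfold hsNormSq
      rw [etr, Complex.sub_re]
      linarith
    rw [hsNorm, hsNorm]; exact Real.sqrt_le_sqrt hle
  have hEΦk : ∀ k X, E (Φ^[k] X) = E X := by
    intro k
    induction k with
    | zero => intro X; simp
    | succ n ih => intro X; rw [Function.iterate_succ_apply', hEΦ', ih]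
  have hΔ : ∀ k X, hsNorm (Φ^[k] X - E X) ≤ lam ^ k * hsNorm X := by
    intro k
    induction k with
    | zero => intro X; simpa using hcontr X
    | succ n ih =>
      intro X
      have hrec : Φ^[n+1] X - E X =
          Φ (Φ^[n] X - E X) - E (Φ^[n] X - E X) := by
        rw [hΦlin.map_sub, hElin.map_sub, hΦE', hEΦk n, hEE,
          Function.iterate_succ_apply']
        abel
      calc hsNorm (Φ^[n+1] X - E X)
          = hsNorm (Φ (Φ^[n] X - E X) - E (Φ^[n] X - E X)) := by rw [hrec]
        _ ≤ lam * hsNorm (Φ^[n] X - E X) := hlamb _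
        _ ≤ lam * (lam ^ n * hsNorm X) := mul_le_mul_of_nonneg_left (ih X) hlam0
        _ = lam ^ (n+1) * hsNorm X := by ring
  have hstarΦ : ∀ X, Φ Xᴴ = (Φ X)ᴴ := starpres_of_choi_herm hΦlin hΦcp.1
  have hstarΦk : ∀ m (X : Matrix (Fin d) (Fin d) ℂ), Φ^[m] Xᴴ = (Φ^[m] X)ᴴ := by
    intro m
    induction m with
    | zero => intro X; simp
    | succ n ih =>
      intro X
      rw [Function.iterate_succ_apply', Function.iterate_succ_apply', ih, hstarΦ]
  have hJEherm : (choi E).IsHermitian := by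
    have h2 : ((CE⁻¹ : ℝ) • P).IsHermitian := by
      rw [rsmul_eq_csmul]
      unfold Matrix.IsHermitian
      rw [Matrix.conjTranspose_smul, hPher.eq]
      congr 1
      simp [Complex.ext_iff]
    have h3 := (hJE.1).add h2
    rwa [sub_add_cancel] at h3
  have hBnorm : ∀ i j : Fin d, hsNorm (Matrix.single i j (1:ℂ)) = 1 := by
    intro i j
    have h1 : hsNormSq (Matrix.single i j (1:ℂ)) = 1 := by
      rw [hsNormSq_eq]
      have h2 : ∀ a b : Fin d, ‖(Matrix.single i j (1:ℂ)) a b‖ ^ 2 =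
          if i = a ∧ j = b then (1:ℝ) else 0 := by
        intro a b
        simp only [Matrix.single, Matrix.of_apply]
        split_ifs <;> simp
      simp_rw [h2, ite_and]
      simp
    rw [hsNorm, h1, Real.sqrt_one]
  intro k hk
  have heps1 : lam ^ k * CE < 1 := by
    rcases eq_or_lt_of_le hlam0 with h0 | hpos
    · have hk0 : 0 < k := by
        rw [← h0] at hk
        simp only [Real.log_zero, neg_zero, div_zero] at hk
        exact_mod_cast hk
      rw [← h0, zero_pow hk0.ne', zero_mul]
      exact one_pos
    · have hlog : Real.log lam < 0 := Real.log_neg hpos hlam1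
      have hden : 0 < -Real.log lam := by linarith
      rw [div_lt_iff₀ hden] at hk
      have hxpos : 0 < lam ^ k * CE := by positivity
      have hlt : Real.log (lam ^ k * CE) < 0 := by
        rw [Real.log_mul (by positivity) hCE.ne', Real.log_pow]
        nlinarith
      exact (Real.log_neg_iff hxpos).mp hlt
  have hJk : (choi (Φ^[k])).IsHermitian := choi_herm_of_starpres (hstarΦk k)
  set D := choi (Φ^[k]) - choi E with hD
  have hDherm : D.IsHermitian := hJk.sub hJEherm
  have hPD : P * D = D := by rw [hD, Matrix.mul_sub, hsupp k, hPfix]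
  have hDentry : ∀ p q : (Fin d) × (Fin d), D p q =
      ((Fintype.card (Fin d) : ℂ))⁻¹ *
        ((Φ^[k] (Matrix.single p.1 q.1 1) -
          E (Matrix.single p.1 q.1 1)) p.2 q.2) := by
    intro p q
    rw [hD]
    simp only [Matrix.sub_apply, choi, Matrix.of_apply]
    rw [mul_sub]
  have hDb : ∑ p, ∑ q, ‖D p q‖ ^ 2 ≤ (lam ^ k) ^ 2 := by
    have hterm : ∀ p1 q1 : Fin d,
        hsNormSq (Φ^[k] (Matrix.single p1 q1 1) -
          E (Matrix.single p1 q1 1)) ≤ (lam ^ k) ^ 2 := by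
      intro p1 q1
      rw [hsNormSq_eq_sq_hsNorm]
      have h6 : hsNorm (Φ^[k] (Matrix.single p1 q1 1) -
          E (Matrix.single p1 q1 1)) ≤ lam ^ k := by
        have := hΔ k (Matrix.single p1 q1 1)
        rwa [hBnorm p1 q1, mul_one] at this
      exact pow_le_pow_left₀ (hsNorm_nonneg _) h6 2
    have hsum : ∑ p : (Fin d) × (Fin d), ∑ q : (Fin d) × (Fin d), ‖D p q‖ ^ 2 =
        ∑ p1 : Fin d, ∑ q1 : Fin d, ((d:ℝ)⁻¹)^2 *
          hsNormSq (Φ^[k] (Matrix.single p1 q1 1) -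
            E (Matrix.single p1 q1 1)) := by
      rw [Fintype.sum_prod_type]
      refine Finset.sum_congr rfl fun p1 _ => ?_
      have e : ∀ p2 : Fin d, ∑ q : (Fin d) × (Fin d), ‖D (p1,p2) q‖^2 =
          ∑ q1 : Fin d, ∑ q2 : Fin d, ‖D (p1,p2) (q1,q2)‖^2 :=
        fun p2 => Fintype.sum_prod_type _
      simp_rw [e]
      rw [Finset.sum_comm]
      refine Finset.sum_congr rfl fun q1 _ => ?_
      rw [hsNormSq_eq, Finset.mul_sum]
      refine Finset.sum_congr rfl fun p2 _ => ?_
      rw [Finset.mul_sum]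
      refine Finset.sum_congr rfl fun q2 _ => ?_
      rw [hDentry (p1,p2) (q1,q2)]
      rw [norm_mul, mul_pow, norm_inv, Complex.norm_natCast, Fintype.card_fin]
    rw [hsum]
    have hstep : ∑ p1 : Fin d, ∑ q1 : Fin d, ((d:ℝ)⁻¹)^2 *
          hsNormSq (Φ^[k] (Matrix.single p1 q1 1) -
            E (Matrix.single p1 q1 1)) ≤
        ∑ _p1 : Fin d, ∑ _q1 : Fin d, ((d:ℝ)⁻¹)^2 * (lam ^ k) ^ 2 := by
      refine Finset.sum_le_sum fun p1 _ => Finset.sum_le_sum fun q1 _ => ?_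
      exact mul_le_mul_of_nonneg_left (hterm p1 q1) (by positivity)
    refine hstep.trans ?_
    rw [Finset.sum_const, Finset.sum_const]
    simp only [Finset.card_univ, Fintype.card_fin, nsmul_eq_mul]
    have hdd : (d:ℝ) * ((d:ℝ) * ((d:ℝ)⁻¹)^2) ≤ 1 := by
      rcases Nat.eq_zero_or_pos d with h | h
      · subst h; simp
      · have : (d:ℝ) ≠ 0 := Nat.cast_ne_zero.mpr h.ne'
        field_simp
        exact le_refl 1
    calc (d:ℝ) * ((d:ℝ) * (((d:ℝ)⁻¹)^2 * (lam ^ k)^2))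
        = ((d:ℝ) * ((d:ℝ) * ((d:ℝ)⁻¹)^2)) * (lam ^ k)^2 := by ring
      _ ≤ 1 * (lam ^ k)^2 := mul_le_mul_of_nonneg_right hdd (by positivity)
      _ = (lam ^ k)^2 := one_mul _
  obtain ⟨hpsd1, hpsd2⟩ := psd_core P D hPher hPidem hDherm hPD (lam ^ k)
    (pow_nonneg hlam0 k) hDb
  have hmid : (((lam ^ k * CE : ℝ) : ℂ) • choi E -
      ((lam ^ k : ℝ) : ℂ) • P).PosSemidef := by
    have h1 : (((lam ^ k * CE : ℝ)) : ℂ) • (choi E - CE⁻¹ • P) =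
        ((lam ^ k * CE : ℝ) : ℂ) • choi E - ((lam ^ k : ℝ) : ℂ) • P := by
      ext p q
      simp only [Matrix.sub_apply, Matrix.smul_apply, smul_eq_mul, Complex.real_smul]
      have hCE0 : (CE:ℂ) ≠ 0 := by exact_mod_cast hCE.ne'
      push_cast
      field_simp
    have h2 := psd_rsmul hJE (mul_nonneg (pow_nonneg hlam0 k) hCE.le)
    rwa [h1] at h2
  refine ⟨heps1, ?_, ?_⟩
  · show (choi _).PosSemidef
    have hchoi : choi (fun X => Φ^[k] X - (1 - lam ^ k * CE) • E X) =
        (((lam ^ k : ℝ) : ℂ) • P + D) +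
          (((lam ^ k * CE : ℝ) : ℂ) • choi E - ((lam ^ k : ℝ) : ℂ) • P) := by
      ext p q
      simp only [choi, Matrix.of_apply, Matrix.add_apply, Matrix.sub_apply,
        Matrix.smul_apply, hD, smul_eq_mul, Complex.real_smul]
      push_cast
      ring
    rw [hchoi]
    exact hpsd2.add hmid
  · show (choi _).PosSemidef
    have hchoi : choi (fun X => (1 + lam ^ k * CE) • E X - Φ^[k] X) =
        (((lam ^ k : ℝ) : ℂ) • P - D) +
          (((lam ^ k * CE : ℝ) : ℂ) • choi E - ((lam ^ k : ℝ) : ℂ) • P) := by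
      ext p q
      simp only [choi, Matrix.of_apply, Matrix.add_apply, Matrix.sub_apply,
        Matrix.smul_apply, hD, smul_eq_mul, Complex.real_smul]
      push_cast
      ring
    rw [hchoi]
    exact hpsd1.add hmid


end Paper
end
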